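/- Let β ∈ ℝ, M ≥ 3 an integer, and 1 ≤ n ≤ M−2. Then (M+1) ∫_{-1/2}^{1/2} Δ_{M+1}(x−β) · U_n(cos 2πx) · sin²(2πx) dx = (M−n+1) sin(2π(n+1)β) sin(2πβ) + cos(2π(n+2)β). -/

import Mathlib

open Real intervalIntegral

/-- Chebyshev polynomials of the second kind, as real functions. -/
noncomputable def chebU : ℕ → ℝ → ℝ
  | 0, _ => 1
  | 1, x => 2 * x
  | (n + 2), x => 2 * x * chebU (n + 1) x - chebU n x

/-- The Fejér kernel `Δ_M(x) = (1/M) (sin(πMx)/sin(πx))²`, extended by continuity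
(value `M`) at the points where `sin(πx) = 0`. -/
noncomputable def fejer (M : ℕ) (x : ℝ) : ℝ :=
  if Real.sin (Real.pi * x) = 0 then (M : ℝ)
  else (1 / (M : ℝ)) * (Real.sin (Real.pi * M * x) / Real.sin (Real.pi * x)) ^ 2

/-!
Multiplied by `M + 1`, the Fejér kernel is the trigonometric polynomial
`(M + 1) + 2 ∑_{k=1}^{M} (M + 1 - k) cos (2πky)`, and
`U_n(cos θ) sin² θ = (cos nθ - cos (n+2)θ) / 2`.
By orthogonality of the cosines on a period, integrating the shifted kernel against `cos (2πmx)`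
gives `(M + 1 - m) cos (2πmβ)`; the two terms `m = n, n + 2` combine to the right-hand side.
-/

open Polynomial in
theorem chebU_eq_eval_U : ∀ (n : ℕ) (x : ℝ), chebU n x = (Chebyshev.U ℝ n).eval x
  | 0, x => by simp [chebU]
  | 1, x => by simp [chebU]
  | n + 2, x => by
      rw [chebU, chebU_eq_eval_U (n + 1), chebU_eq_eval_U n]
      push_cast
      simp [Chebyshev.U_add_two]

theorem chebU_cos_mul_sin (n : ℕ) (θ : ℝ) :
    chebU n (cos θ) * sin θ = sin ((n + 1) * θ) := by
  rw [chebU_eq_eval_U]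
  exact_mod_cast Polynomial.Chebyshev.U_real_cos θ n

theorem sum_Icc_sub_mul_succ (N : ℕ) (f : ℕ → ℝ) :
    ∑ k ∈ Finset.Icc 1 (N + 1), ((N + 1 : ℕ) - k : ℝ) * f k
      = ∑ k ∈ Finset.Icc 1 N, ((N : ℝ) - k) * f k + ∑ k ∈ Finset.Icc 1 N, f k := by
  rw [Finset.sum_Icc_succ_top (by omega), ← Finset.sum_add_distrib]
  push_cast
  simp only [sub_self, zero_mul, add_zero]
  exact Finset.sum_congr rfl fun k _ => by ring

theorem sin_mul_dirichlet (N : ℕ) (y : ℝ) :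
    sin (π * y) * (1 + 2 * ∑ k ∈ Finset.Icc 1 N, cos (2 * π * k * y))
      = sin ((2 * N + 1) * π * y) := by
  induction N with
  | zero => simp
  | succ N ih =>
    rw [Finset.sum_Icc_succ_top (by omega)]
    have h := two_mul_sin_mul_cos (π * y) (2 * π * (N + 1) * y)
    rw [show π * y - 2 * π * (N + 1) * y = -((2 * N + 1) * π * y) by ring,
      show π * y + 2 * π * (N + 1) * y = (2 * (N + 1) + 1) * π * y by ring, sin_neg] at h
    push_cast
    linear_combination ih + h

noncomputable def fejerTrigPoly (N : ℕ) (y : ℝ) : ℝ :=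
  N + 2 * ∑ k ∈ Finset.Icc 1 N, ((N : ℝ) - k) * cos (2 * π * k * y)

theorem sin_sq_mul_fejerTrigPoly (N : ℕ) (y : ℝ) :
    sin (π * y) ^ 2 * fejerTrigPoly N y = sin (π * N * y) ^ 2 := by
  induction N with
  | zero => simp [fejerTrigPoly]
  | succ N ih =>
    have hsq : sin (π * (N + 1 : ℕ) * y) ^ 2
        = sin (π * N * y) ^ 2 + sin ((2 * N + 1) * π * y) * sin (π * y) := by
      have h := two_mul_sin_mul_sin ((2 * N + 1) * π * y) (π * y)
      rw [show (2 * N + 1) * π * y - π * y = 2 * (π * N * y) by ring,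
        show (2 * N + 1) * π * y + π * y = 2 * (π * (N + 1 : ℕ) * y) by push_cast; ring] at h
      rw [sin_sq_eq_half_sub, sin_sq_eq_half_sub]
      linear_combination -h / 2
    rw [fejerTrigPoly] at ih
    rw [fejerTrigPoly, sum_Icc_sub_mul_succ, hsq, ← ih, ← sin_mul_dirichlet N y]
    push_cast
    ring

theorem fejerTrigPoly_intCast (N : ℕ) (j : ℤ) : fejerTrigPoly N j = N ^ 2 := by
  have hcos (k : ℕ) : cos (2 * π * k * j) = 1 := by
    rw [show 2 * π * k * j = ((k * j : ℤ) : ℝ) * (2 * π) by push_cast; ring,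
      cos_int_mul_two_pi]
  simp only [fejerTrigPoly, hcos, mul_one]
  induction N with
  | zero => simp
  | succ N ih =>
    have h := sum_Icc_sub_mul_succ N (fun _ => 1)
    simp only [mul_one, Finset.sum_const, Nat.card_Icc, nsmul_eq_mul] at h
    rw [h]
    push_cast at ih ⊢
    linear_combination ih

theorem natCast_mul_fejer (N : ℕ) (y : ℝ) : N * fejer N y = fejerTrigPoly N y := by
  rw [fejer]
  split_ifs with h
  · obtain ⟨j, hj⟩ := sin_eq_zero_iff.mp h
    obtain rfl : y = j := mul_left_cancel₀ pi_ne_zero (by linarith)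
    rw [fejerTrigPoly_intCast, sq]
  · rw [eq_div_of_mul_eq (pow_ne_zero 2 h) ((mul_comm _ _).trans (sin_sq_mul_fejerTrigPoly N y))]
    rcases eq_or_ne N 0 with rfl | hN
    · simp
    · field_simp

theorem continuous_fejerTrigPoly (N : ℕ) : Continuous (fejerTrigPoly N) := by
  unfold fejerTrigPoly
  fun_prop

theorem integral_cos_two_pi_int_mul_sub (j : ℤ) (c : ℝ) :
    ∫ x in (-1/2 : ℝ)..(1/2), cos (2 * π * j * x - c) = if j = 0 then cos c else 0 := by
  split_ifs with hj
  · norm_num [hj]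
  · have hj' : 2 * π * j ≠ 0 := by simp [pi_ne_zero, hj]
    rw [integral_comp_mul_sub (fun x => cos x) hj', integral_cos,
      show 2 * π * j * (1/2) - c = (2 * π * j * (-1/2) - c) + j * (2 * π) by ring,
      sin_add_int_mul_two_pi, sub_self, smul_zero]

theorem integral_cos_mul_cos (k m : ℕ) (hk : k ≠ 0) (β : ℝ) :
    ∫ x in (-1/2 : ℝ)..(1/2), cos (2 * π * k * (x - β)) * cos (2 * π * m * x)
      = if k = m then cos (2 * π * k * β) / 2 else 0 := by
  have hprod (x : ℝ) : cos (2 * π * k * (x - β)) * cos (2 * π * m * x)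
      = (cos (2 * π * ((k - m : ℤ) : ℝ) * x - 2 * π * k * β)
          + cos (2 * π * ((k + m : ℤ) : ℝ) * x - 2 * π * k * β)) / 2 := by
    rw [show 2 * π * ((k - m : ℤ) : ℝ) * x - 2 * π * k * β
        = 2 * π * k * (x - β) - 2 * π * m * x by push_cast; ring,
      show 2 * π * ((k + m : ℤ) : ℝ) * x - 2 * π * k * β
        = 2 * π * k * (x - β) + 2 * π * m * x by push_cast; ring, ← two_mul_cos_mul_cos]
    ring
  simp_rw [hprod]
  rw [integral_div, integral_add (Continuous.intervalIntegrable (by fun_prop) _ _)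
      (Continuous.intervalIntegrable (by fun_prop) _ _),
    integral_cos_two_pi_int_mul_sub, integral_cos_two_pi_int_mul_sub,
    if_neg (show (k + m : ℤ) ≠ 0 by omega)]
  simp only [sub_eq_zero, Nat.cast_inj, add_zero, ite_div, zero_div]

theorem integral_fejerTrigPoly_sub_mul_cos (N m : ℕ) (hm : m ≤ N) (β : ℝ) :
    ∫ x in (-1/2 : ℝ)..(1/2), fejerTrigPoly N (x - β) * cos (2 * π * m * x)
      = (N - m) * cos (2 * π * m * β) := by
  -- The constant term is written as `cos (2π m x - 0)` to match `integral_cos_two_pi_int_mul_sub`.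
  have hexpand (x : ℝ) : fejerTrigPoly N (x - β) * cos (2 * π * m * x)
      = N * cos (2 * π * ((m : ℤ) : ℝ) * x - 0) + ∑ k ∈ Finset.Icc 1 N,
          2 * ((N : ℝ) - k) * (cos (2 * π * k * (x - β)) * cos (2 * π * m * x)) := by
    rw [fejerTrigPoly, add_mul, Finset.mul_sum, Finset.sum_mul, Int.cast_natCast, sub_zero]
    exact congrArg _ (Finset.sum_congr rfl fun k _ => by ring)
  have hcoeff : ∀ k ∈ Finset.Icc 1 N,
      ∫ x in (-1/2 : ℝ)..(1/2),
          2 * ((N : ℝ) - k) * (cos (2 * π * k * (x - β)) * cos (2 * π * m * x))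
        = if k = m then (N - m) * cos (2 * π * m * β) else 0 := by
    intro k hk
    rw [integral_const_mul,
      integral_cos_mul_cos k m (Nat.pos_iff_ne_zero.mp (Finset.mem_Icc.mp hk).1)]
    split_ifs with hkm
    · subst hkm; ring
    · simp
  simp_rw [hexpand]
  rw [integral_add (Continuous.intervalIntegrable (by fun_prop) _ _)
      (Continuous.intervalIntegrable (by fun_prop) _ _),
    integral_const_mul, integral_cos_two_pi_int_mul_sub,
    integral_finsetSum (fun k _ => Continuous.intervalIntegrable (by fun_prop) _ _),
    Finset.sum_congr rfl hcoeff, Finset.sum_ite_eq']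
  rcases eq_or_ne m 0 with rfl | hm0
  · simp
  · simp [hm0, Nat.one_le_iff_ne_zero.mpr hm0, hm]

theorem chebU_cos_mul_sin_sq (n : ℕ) (θ : ℝ) :
    chebU n (cos θ) * sin θ ^ 2 = (cos (n * θ) - cos ((n + 2) * θ)) / 2 := by
  have h := two_mul_sin_mul_sin ((n + 1) * θ) θ
  rw [show (n + 1) * θ - θ = n * θ by ring, show (n + 1) * θ + θ = (n + 2) * θ by ring] at h
  rw [sq, ← mul_assoc, chebU_cos_mul_sin]
  linear_combination h / 2

theorem stmt7_general (β : ℝ) (M : ℕ) (n : ℕ) (hnM : n + 2 ≤ M) :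
    ((M : ℝ) + 1) * ∫ x in (-1/2 : ℝ)..(1/2),
        fejer (M + 1) (x - β) * chebU n (Real.cos (2 * Real.pi * x)) *
          (Real.sin (2 * Real.pi * x)) ^ 2
      = ((M : ℝ) - n + 1) * Real.sin (2 * Real.pi * (n + 1) * β) * Real.sin (2 * Real.pi * β)
        + Real.cos (2 * Real.pi * (n + 2) * β) := by
  have hcont (m : ℕ) :
      Continuous fun x => fejerTrigPoly (M + 1) (x - β) * cos (2 * π * m * x) :=
    ((continuous_fejerTrigPoly _).comp (continuous_sub_right β)).mul (by fun_prop)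
  calc ((M : ℝ) + 1) * ∫ x in (-1/2 : ℝ)..(1/2),
        fejer (M + 1) (x - β) * chebU n (cos (2 * π * x)) * sin (2 * π * x) ^ 2
      = ∫ x in (-1/2 : ℝ)..(1/2), (fejerTrigPoly (M + 1) (x - β) * cos (2 * π * n * x)
          - fejerTrigPoly (M + 1) (x - β) * cos (2 * π * (n + 2 : ℕ) * x)) / 2 := by
        rw [← integral_const_mul]
        congr 1 with x
        rw [mul_assoc, chebU_cos_mul_sin_sq, ← natCast_mul_fejer]
        push_cast
        ring_nf
    _ = ((M + 1 - n) * cos (2 * π * n * β)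
          - (M + 1 - (n + 2 : ℕ)) * cos (2 * π * (n + 2 : ℕ) * β)) / 2 := by
        rw [integral_div, integral_sub ((hcont n).intervalIntegrable _ _)
            ((hcont (n + 2)).intervalIntegrable _ _),
          integral_fejerTrigPoly_sub_mul_cos _ _ (by omega),
          integral_fejerTrigPoly_sub_mul_cos _ _ (by omega)]
        push_cast
        ring
    _ = _ := by
        have h := two_mul_sin_mul_sin (2 * π * (n + 1) * β) (2 * π * β)
        rw [show 2 * π * (n + 1) * β - 2 * π * β = 2 * π * n * β by ring,
          show 2 * π * (n + 1) * β + 2 * π * β = 2 * π * (n + 2) * β by ring] at h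
        push_cast
        linear_combination -(M - n + 1) / 2 * h

theorem stmt7 (β : ℝ) (M : ℕ) (hM : 3 ≤ M) (n : ℕ) (hn : 1 ≤ n) (hnM : n + 2 ≤ M) :
    ((M : ℝ) + 1) * ∫ x in (-1/2 : ℝ)..(1/2),
        fejer (M + 1) (x - β) * chebU n (Real.cos (2 * Real.pi * x)) *
          (Real.sin (2 * Real.pi * x)) ^ 2
      = ((M : ℝ) - n + 1) * Real.sin (2 * Real.pi * (n + 1) * β) * Real.sin (2 * Real.pi * β)
        + Real.cos (2 * Real.pi * (n + 2) * β) :=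
  stmt7_general β M n hnM
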